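/- Let G be a finite simple connected undirected graph with n ≥ 8 vertices and m edges in which every vertex has degree at least 1, and let η be a positive integer. Suppose that for each vertex v, η·d(v) mutually independent simple random walks are started at v, and all walks advance one step per round. Then for every edge e of G and every round j ≥ 1, the number X^j(e) of walks that traverse e (in either direction) at step j satisfies Pr(X^j(e) ≥ 4η·log₂ n) ≤ n^{−4}. -/

import Mathlib

open Finset

section Defs

variable {V : Type} [Fintype V] [DecidableEq V]

/-- Transition kernel of the simple random walk on `G`: move to a uniformly random
neighbor. -/
noncomputable def simpleStep (G : SimpleGraph V) [DecidableRel G.Adj] (u v : V) : ℝ :=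
  if G.Adj u v then 1 / (G.degree u : ℝ) else 0

/-- Law (probability mass function) of the simple random walk of length `t` started at
`x`, as a function on trajectories `Fin (t+1) → V`. -/
noncomputable def simpleWalkLaw (G : SimpleGraph V) [DecidableRel G.Adj] (x : V) (t : ℕ)
    (f : Fin (t + 1) → V) : ℝ :=
  (if f 0 = x then 1 else 0) * ∏ i : Fin t, simpleStep G (f i.castSucc) (f i.succ)

end Defs

/-!
The degree measure `d` is stationary for the simple random walk, so a walk started from the
degree-weighted distribution traverses, at every step, a uniformly random dart; exactly two darts
lie on `e`. Hence, summed over all `η·d(v)` walks, the probabilities of traversing `e` at step `j`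
add up to `2η`. The Chernoff bound with exponential base `4` then gives
`Pr(X ≥ a) ≤ E[4^X] / 4^a ≤ exp(3 · 2η) / 4^a`, and `4^(4η log₂ n) = n^(8η)` beats
`exp(6η) n^4` once `n ≥ 8`.
-/

section Chernoff

variable {ι β : Type*} [Fintype ι] [Fintype β]

theorem sum_prod_mul_pow_card_filter [DecidableEq ι] {R : Type*} [CommSemiring R]
    (p : ι → β → R) (P : β → Prop) [DecidablePred P] (c : R) :
    ∑ F : ι → β, (∏ i, p i (F i)) * c ^ #{i | P (F i)} =
      ∏ i, ∑ b, p i b * if P b then c else 1 := by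
  rw [Fintype.prod_sum]
  refine sum_congr rfl fun F _ => ?_
  rw [prod_mul_distrib, prod_ite, prod_const, prod_const_one, mul_one]

theorem prod_sum_mul_ite_le_exp (p : ι → β → ℝ) (hp₀ : ∀ i b, 0 ≤ p i b)
    (hp₁ : ∀ i, ∑ b, p i b ≤ 1) (P : β → Prop) [DecidablePred P] {c : ℝ} (hc : 1 ≤ c) :
    ∏ i, ∑ b, p i b * (if P b then c else 1) ≤
      Real.exp ((c - 1) * ∑ i, ∑ b with P b, p i b) := by
  have hfactor : ∀ i, ∑ b, p i b * (if P b then c else 1) =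
      ∑ b, p i b + (c - 1) * ∑ b with P b, p i b := by
    intro i
    rw [sum_filter, mul_sum, ← sum_add_distrib]
    exact sum_congr rfl fun b _ => by split_ifs <;> ring
  rw [mul_sum, Real.exp_sum]
  refine prod_le_prod (fun i _ => ?_) fun i _ => ?_
  · exact sum_nonneg fun b _ => mul_nonneg (hp₀ i b) (by split_ifs <;> linarith)
  · rw [hfactor]
    linarith [hp₁ i, Real.add_one_le_exp ((c - 1) * ∑ b with P b, p i b)]

theorem sum_indicator_le_sum_mul_pow_div {α : Type*} [Fintype α] (μ : α → ℝ)
    (hμ : ∀ x, 0 ≤ μ x) (X : α → ℕ) {c : ℝ} (hc : 1 ≤ c) (a : ℝ) :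
    ∑ x, {x | a ≤ (X x : ℝ)}.indicator μ x ≤ (∑ x, μ x * c ^ X x) / c ^ a := by
  have hca : 0 < c ^ a := Real.rpow_pos_of_pos (by linarith) a
  rw [sum_div]
  refine sum_le_sum fun x _ => ?_
  rw [le_div_iff₀ hca]
  by_cases hx : a ≤ (X x : ℝ)
  · rw [Set.indicator_of_mem (s := {x | a ≤ (X x : ℝ)}) hx]
    refine mul_le_mul_of_nonneg_left ?_ (hμ x)
    rw [← Real.rpow_natCast]
    exact Real.rpow_le_rpow_of_exponent_le hc hx
  · rw [Set.indicator_of_notMem (s := {x | a ≤ (X x : ℝ)}) hx, zero_mul]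
    exact mul_nonneg (hμ x) (pow_nonneg (by linarith) _)

/-- Chernoff bound at base `c`; the product weight makes the coordinates of `F` independent. -/
theorem sum_indicator_card_filter_le [DecidableEq ι] (p : ι → β → ℝ) (hp₀ : ∀ i b, 0 ≤ p i b)
    (hp₁ : ∀ i, ∑ b, p i b ≤ 1) (P : β → Prop) [DecidablePred P] {c : ℝ} (hc : 1 ≤ c)
    (a : ℝ) :
    ∑ F : ι → β, {F : ι → β | a ≤ (#{i | P (F i)} : ℝ)}.indicator
        (fun F => ∏ i, p i (F i)) F ≤
      Real.exp ((c - 1) * ∑ i, ∑ b with P b, p i b) / c ^ a := by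
  refine (sum_indicator_le_sum_mul_pow_div _ (fun F => prod_nonneg fun i _ => hp₀ i (F i))
    _ hc a).trans ?_
  rw [sum_prod_mul_pow_card_filter]
  gcongr
  exact prod_sum_mul_ite_le_exp p hp₀ hp₁ P hc

end Chernoff

theorem Sym2.card_filter_mk_eq_two {α : Type*} [Fintype α] [DecidableEq α] {e : Sym2 α}
    (he : ¬e.IsDiag) : #{p : α × α | s(p.1, p.2) = e} = 2 := by
  induction e using Sym2.ind with
  | _ a b =>
  have hab : a ≠ b := he
  rw [show ({p : α × α | s(p.1, p.2) = s(a, b)} : Finset _) = {(a, b), (b, a)} by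
    ext ⟨u, v⟩; simp]
  exact card_pair (by simp [hab])

namespace SimpleGraph

variable {V : Type} [Fintype V] (G : SimpleGraph V) [DecidableRel G.Adj]

theorem simpleStep_nonneg (u v : V) : 0 ≤ simpleStep G u v := by
  unfold simpleStep; positivity

theorem degree_mul_simpleStep (u v : V) :
    (G.degree u : ℝ) * simpleStep G u v = if G.Adj u v then 1 else 0 := by
  unfold simpleStep
  split_ifs with h
  · have hd : (G.degree u : ℝ) ≠ 0 :=
      Nat.cast_ne_zero.2 ((G.degree_pos_iff_exists_adj u).2 ⟨v, h⟩).ne'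
    rw [mul_one_div, div_self hd]
  · rw [mul_zero]

theorem sum_simpleStep_le_one (u : V) : ∑ v, simpleStep G u v ≤ 1 := by
  simp only [simpleStep, ← sum_filter, sum_const, ← neighborFinset_eq_filter,
    card_neighborFinset_eq_degree, nsmul_eq_mul, mul_one_div]
  exact div_self_le_one _

theorem sum_degree_mul_simpleStep (v : V) :
    ∑ u, (G.degree u : ℝ) * simpleStep G u v = G.degree v := by
  simp only [degree_mul_simpleStep, G.adj_comm _ v, sum_boole, ← neighborFinset_eq_filter,
    card_neighborFinset_eq_degree]

theorem simpleWalkLaw_nonneg [DecidableEq V] (x : V) (t : ℕ) (f : Fin (t + 1) → V) :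
    0 ≤ simpleWalkLaw G x t f := by
  unfold simpleWalkLaw
  exact mul_nonneg (by positivity) (prod_nonneg fun i _ => simpleStep_nonneg G _ _)

theorem simpleWalkLaw_snoc [DecidableEq V] (x : V) (t : ℕ) (f : Fin (t + 1) → V) (v : V) :
    simpleWalkLaw G x (t + 1) (Fin.snoc f v) =
      simpleWalkLaw G x t f * simpleStep G (f (Fin.last t)) v := by
  have h₀ : (Fin.snoc f v : Fin (t + 2) → V) 0 = f 0 := Fin.snoc_castSucc (i := 0) ..
  simp only [simpleWalkLaw, Fin.prod_univ_castSucc, Fin.succ_castSucc, Fin.snoc_castSucc,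
    Fin.succ_last, Fin.snoc_last, h₀, mul_assoc]

theorem sum_simpleWalkLaw_succ_mul [DecidableEq V] (x : V) (t : ℕ)
    (φ : (Fin (t + 1) → V) → V → ℝ) :
    ∑ f : Fin (t + 2) → V, simpleWalkLaw G x (t + 1) f * φ (Fin.init f) (f (Fin.last (t + 1))) =
      ∑ f : Fin (t + 1) → V, simpleWalkLaw G x t f *
        ∑ v, simpleStep G (f (Fin.last t)) v * φ f v := by
  rw [← (Fin.snocEquiv fun _ => V).sum_comp, Fintype.sum_prod_type, sum_comm]
  simp [Fin.snocEquiv, simpleWalkLaw_snoc, Fin.init_snoc, mul_sum, mul_assoc]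

theorem sum_simpleWalkLaw_zero_mul [DecidableEq V] (x : V) (h : V → ℝ) :
    ∑ f : Fin (0 + 1) → V, simpleWalkLaw G x 0 f * h (f (Fin.last 0)) = h x := by
  rw [← (Equiv.funUnique (Fin 1) V).symm.sum_comp]
  simp [simpleWalkLaw]

theorem sum_simpleWalkLaw_le_one [DecidableEq V] (x : V) (t : ℕ) :
    ∑ f : Fin (t + 1) → V, simpleWalkLaw G x t f ≤ 1 := by
  induction t with
  | zero => simpa using (sum_simpleWalkLaw_zero_mul G x 1).le
  | succ t ih =>
    have hmarkov := sum_simpleWalkLaw_succ_mul G x t fun _ _ => 1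
    simp only [mul_one] at hmarkov
    rw [hmarkov]
    refine le_trans (sum_le_sum fun f _ => ?_) ih
    exact mul_le_of_le_one_right (simpleWalkLaw_nonneg G x t f) (sum_simpleStep_le_one G _)

theorem sum_degree_mul_sum_simpleWalkLaw_mul [DecidableEq V] (t : ℕ) (h : V → ℝ) :
    ∑ x, (G.degree x : ℝ) * ∑ f : Fin (t + 1) → V, simpleWalkLaw G x t f * h (f (Fin.last t)) =
      ∑ v, (G.degree v : ℝ) * h v := by
  induction t generalizing h with
  | zero => simp only [sum_simpleWalkLaw_zero_mul]
  | succ t ih =>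
    simp only [sum_simpleWalkLaw_succ_mul G _ t fun _ v => h v]
    rw [ih fun w => ∑ v, simpleStep G w v * h v]
    calc ∑ w, (G.degree w : ℝ) * ∑ v, simpleStep G w v * h v
        = ∑ v, (∑ w, (G.degree w : ℝ) * simpleStep G w v) * h v := by
          simp only [mul_sum, sum_mul, mul_assoc]
          exact sum_comm
      _ = ∑ v, (G.degree v : ℝ) * h v := by simp only [sum_degree_mul_simpleStep]

theorem sum_degree_mul_sum_simpleWalkLaw_traverse [DecidableEq V] {e : Sym2 V}
    (he : e ∈ G.edgeSet) (t : ℕ) :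
    ∑ x, (G.degree x : ℝ) * ∑ f : Fin (t + 2) → V with
      s(f (Fin.castSucc (Fin.last t)), f (Fin.last (t + 1))) = e, simpleWalkLaw G x (t + 1) f =
      2 := by
  calc _ = ∑ x, (G.degree x : ℝ) * ∑ f : Fin (t + 1) → V, simpleWalkLaw G x t f *
          ∑ v, simpleStep G (f (Fin.last t)) v * if s(f (Fin.last t), v) = e then 1 else 0 := by
        refine sum_congr rfl fun x _ => ?_
        rw [sum_filter, ← sum_simpleWalkLaw_succ_mul G x t
          fun g v => if s(g (Fin.last t), v) = e then 1 else 0]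
        simp only [mul_boole]
        rfl
    _ = ∑ w, ∑ v, if s(w, v) = e then (1 : ℝ) else 0 := by
        rw [sum_degree_mul_sum_simpleWalkLaw_mul G t
          fun w => ∑ v, simpleStep G w v * if s(w, v) = e then 1 else 0]
        simp only [mul_sum, ← mul_assoc, degree_mul_simpleStep, ite_zero_mul_ite_zero, mul_one]
        refine sum_congr rfl fun w _ => sum_congr rfl fun v _ => if_congr ?_ rfl rfl
        exact ⟨fun h => h.2, fun h => ⟨by rw [← mem_edgeSet, h]; exact he, h⟩⟩
    _ = 2 := by
        rw [← Fintype.sum_prod_type', sum_boole,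
          Sym2.card_filter_mk_eq_two (G.not_isDiag_of_mem_edgeSet he)]
        norm_num

end SimpleGraph

theorem Real.four_rpow_mul_logb_two {x : ℝ} (hx : 0 < x) (k : ℕ) :
    (4 : ℝ) ^ (k * Real.logb 2 x) = x ^ (2 * k) := by
  rw [show (4 : ℝ) = 2 ^ (2 : ℝ) by norm_num, ← Real.rpow_mul zero_le_two,
    show 2 * (k * Real.logb 2 x) = Real.logb 2 x * (2 * k : ℕ) by push_cast; ring,
    Real.rpow_mul zero_le_two, Real.rpow_logb zero_lt_two (by norm_num) hx, Real.rpow_natCast]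

theorem Real.exp_mul_pow_four_le_pow {η : ℕ} (hη : 1 ≤ η) {x : ℝ} (hx : 8 ≤ x) :
    Real.exp (6 * η) * x ^ 4 ≤ x ^ (8 * η) := by
  have hexp : Real.exp 6 ≤ 8 ^ 4 := by
    calc Real.exp 6 = Real.exp 1 ^ 6 := by rw [← Real.exp_nat_mul]; norm_num
      _ ≤ 3 ^ 6 := by gcongr; exact Real.exp_one_lt_three.le
      _ ≤ 8 ^ 4 := by norm_num
  have hx4 : 1 ≤ x ^ 4 := one_le_pow₀ (by linarith)
  calc Real.exp (6 * η) * x ^ 4 ≤ (x ^ 4) ^ η * (x ^ 4) ^ η := by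
        rw [mul_comm 6, Real.exp_nat_mul]
        gcongr
        · exact hexp.trans (by gcongr)
        · exact le_self_pow₀ hx4 (by omega)
    _ = x ^ (8 * η) := by ring

/-- start `η·d(v)` mutually independent simple random walks at every vertex
`v` (joint law = product of the individual walk laws). If the graph has `n ≥ 8` vertices,
then for every edge `e` and round `j ≥ 1`, the number `X^j(e)` of walks traversing `e`
(in either direction) at step `j` satisfies `Pr(X^j(e) ≥ 4η·log₂ n) ≤ n^{−4}`. -/
theorem statement_16 (V : Type) [Fintype V] [DecidableEq V]
    (G : SimpleGraph V) [DecidableRel G.Adj]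
    (hn : 8 ≤ Fintype.card V)
    (η : ℕ) (hη : 0 < η)
    (e : Sym2 V) (he : e ∈ G.edgeFinset) (j : ℕ) (hj : 1 ≤ j) :
    (∑ F : ((w : V) × Fin (η * G.degree w)) → Fin (j + 1) → V,
        Set.indicator
          {F : ((w : V) × Fin (η * G.degree w)) → Fin (j + 1) → V |
            4 * (η : ℝ) * Real.logb 2 (Fintype.card V) ≤
              ((Finset.univ.filter fun idx : (w : V) × Fin (η * G.degree w) =>
                s(F idx ⟨j - 1, by omega⟩, F idx ⟨j, by omega⟩) = e).card : ℝ)}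
          (fun F => ∏ idx : (w : V) × Fin (η * G.degree w), simpleWalkLaw G idx.1 j (F idx))
          F)
      ≤ 1 / (Fintype.card V : ℝ) ^ 4 := by
  obtain ⟨t, rfl⟩ : ∃ t, j = t + 1 := ⟨j - 1, by omega⟩
  have hn₈ : (8 : ℝ) ≤ Fintype.card V := by exact_mod_cast hn
  have htraverse : ∑ i : (w : V) × Fin (η * G.degree w), ∑ f : Fin (t + 2) → V with
      s(f (Fin.castSucc (Fin.last t)), f (Fin.last (t + 1))) = e,
        simpleWalkLaw G i.1 (t + 1) f = 2 * η := by
    rw [Fintype.sum_sigma]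
    simp only [sum_const, card_univ, Fintype.card_fin, nsmul_eq_mul, Nat.cast_mul, mul_assoc,
      ← mul_sum, G.sum_degree_mul_sum_simpleWalkLaw_traverse (G.mem_edgeFinset.1 he)]
    ring
  have hchernoff := sum_indicator_card_filter_le
    (fun i : (w : V) × Fin (η * G.degree w) => simpleWalkLaw G i.1 (t + 1))
    (fun i => G.simpleWalkLaw_nonneg i.1 (t + 1)) (fun i => G.sum_simpleWalkLaw_le_one i.1 _)
    (fun f => s(f (Fin.castSucc (Fin.last t)), f (Fin.last (t + 1))) = e)
    (by norm_num : (1 : ℝ) ≤ 4) (4 * η * Real.logb 2 (Fintype.card V))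
  refine hchernoff.trans ?_
  rw [htraverse, show 4 * (η : ℝ) = (4 * η : ℕ) by push_cast; ring,
    Real.four_rpow_mul_logb_two (by linarith), div_le_div_iff₀ (by positivity) (by positivity),
    one_mul, show 2 * (4 * η) = 8 * η by ring, show (4 - 1) * (2 * (η : ℝ)) = 6 * η by ring]
  exact Real.exp_mul_pow_four_le_pow hη hn₈
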